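/- Let G be an n-vertex graph such that α₁(G) + τ(G) > n²/4 while every proper induced subgraph H of G satisfies α₁(H) + τ(H) ≤ |V(H)|²/4. Then the minimum degree of G satisfies δ(G) > n/2. -/

import Mathlib

open Finset

/-- `A` is a triangle-independent set of edges of `G`: it consists of edges of `G`
and contains at most one edge from each triangle of `G`. -/
def TriIndep {V : Type*} (G : SimpleGraph V) (A : Finset (Sym2 V)) : Prop :=
  (A : Set (Sym2 V)) ⊆ G.edgeSet ∧
    ∀ x y z : V, G.Adj x y → G.Adj y z → G.Adj x z →
      ¬(s(x, y) ∈ A ∧ s(y, z) ∈ A)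

/-- `α₁ G`: the maximum size of a triangle-independent set of edges of `G`. -/
noncomputable def alpha1 {V : Type*} [Fintype V] (G : SimpleGraph V) : ℕ :=
  sSup {k | ∃ A : Finset (Sym2 V), TriIndep G A ∧ A.card = k}

/-- `τ G`: the minimum size of a set of edges whose deletion makes `G` triangle-free. -/
noncomputable def tau {V : Type*} [Fintype V] (G : SimpleGraph V) : ℕ :=
  sInf {k | ∃ X : Finset (Sym2 V), (X : Set (Sym2 V)) ⊆ G.edgeSet ∧
    (G.deleteEdges (X : Set (Sym2 V))).CliqueFree 3 ∧ X.card = k}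

/-- `τ_B G`: the minimum size of a set of edges whose deletion makes `G` bipartite. -/
noncomputable def tauB {V : Type*} [Fintype V] (G : SimpleGraph V) : ℕ :=
  sInf {k | ∃ X : Finset (Sym2 V), (X : Set (Sym2 V)) ⊆ G.edgeSet ∧
    (G.deleteEdges (X : Set (Sym2 V))).Colorable 2 ∧ X.card = k}

open scoped Classical in
/-- The edge cut `[S, S̄]`: the set of edges of `G` with one endpoint in `S`
and the other outside `S`. -/
noncomputable def edgeCut {V : Type*} [Fintype V] (G : SimpleGraph V) (S : Finset V) :
    Finset (Sym2 V) :=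
  G.edgeFinset.filter (fun e => ∃ x ∈ S, ∃ y ∉ S, e = s(x, y))

open scoped Classical in
/-- The number of edges of `G`. -/
noncomputable def edgeCount {V : Type*} [Fintype V] (G : SimpleGraph V) : ℕ :=
  G.edgeFinset.card

/-- The independence number of `G`. -/
noncomputable def indepNum {V : Type*} [Fintype V] (G : SimpleGraph V) : ℕ :=
  sSup {k | ∃ I : Finset V, (∀ x ∈ I, ∀ y ∈ I, ¬G.Adj x y) ∧ I.card = k}

/-- `K₄⁻`: the complete graph on 4 vertices with one edge deleted. -/
def K4minus : SimpleGraph (Fin 4) := (SimpleGraph.completeGraph (Fin 4)).deleteEdges {s(0, 1)}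

/-! Deleting a vertex `v` costs `α₁ + τ` at most `deg v`: a maximum triangle-independent set `A`
restricts to one of `G - v`, and the edges at `v` outside `A` together with a minimum triangle
edge cover of `G - v` cover all triangles of `G`, since no triangle at `v` has two edges in `A`.
Minimality of `G` then gives `n² / 4 < α₁ + τ ≤ (n - 1)² / 4 + deg v`, and integrality sharpens
this to `2 deg v > n`. -/

section TriangleParameters

variable {V : Type*} [Fintype V] (G : SimpleGraph V)

lemma bddAbove_card_triIndep : BddAbove {k | ∃ A : Finset (Sym2 V), TriIndep G A ∧ #A = k} := by
  classical
  exact ⟨Fintype.card (Sym2 V), by rintro k ⟨A, -, rfl⟩; exact A.card_le_univ⟩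

lemma exists_triIndep_card_eq_alpha1 : ∃ A : Finset (Sym2 V), TriIndep G A ∧ #A = alpha1 G :=
  Nat.sSup_mem (by exact ⟨0, ∅, ⟨by simp, by simp⟩, rfl⟩) (bddAbove_card_triIndep G)

variable {G} in
lemma TriIndep.card_le_alpha1 {A : Finset (Sym2 V)} (hA : TriIndep G A) : #A ≤ alpha1 G :=
  le_csSup (bddAbove_card_triIndep G) ⟨A, hA, rfl⟩

lemma exists_cliqueFree_deleteEdges_card_eq_tau : ∃ X : Finset (Sym2 V),
    (X : Set (Sym2 V)) ⊆ G.edgeSet ∧ (G.deleteEdges X).CliqueFree 3 ∧ #X = tau G := by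
  classical
  refine Nat.sInf_mem (s := {k | ∃ X : Finset (Sym2 V), (X : Set (Sym2 V)) ⊆ G.edgeSet ∧
    (G.deleteEdges X).CliqueFree 3 ∧ #X = k}) ⟨_, G.edgeFinset, by simp, ?_, rfl⟩
  rw [SimpleGraph.coe_edgeFinset, SimpleGraph.deleteEdges_edgeSet, sdiff_self]
  exact SimpleGraph.cliqueFree_bot (by norm_num)

variable {G} in
lemma tau_le_card {X : Finset (Sym2 V)} (hXG : (X : Set (Sym2 V)) ⊆ G.edgeSet)
    (hX : (G.deleteEdges X).CliqueFree 3) : tau G ≤ #X :=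
  Nat.sInf_le ⟨X, hXG, hX, rfl⟩

end TriangleParameters

lemma Nat.lt_two_mul_of_sq_lt_four_mul {n a b d : ℕ} (ha : n ^ 2 < 4 * a)
    (hb : 4 * b ≤ (n - 1) ^ 2) (had : a ≤ b + d) : n < 2 * d := by
  rcases n with _ | m
  · omega
  rw [Nat.add_sub_cancel] at hb
  obtain ⟨k, rfl | rfl⟩ := Nat.even_or_odd' m <;> ring_nf at ha hb <;> omega

lemma Sym2.mem_range_map_subtypeVal_iff {V : Type*} {s : Set V} {e : Sym2 V} :
    e ∈ Set.range (Sym2.map ((↑) : s → V)) ↔ ∀ x ∈ e, x ∈ s := by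
  constructor
  · rintro ⟨e, rfl⟩ x hx
    obtain ⟨a, -, rfl⟩ := Sym2.mem_map.1 hx
    exact a.2
  · induction e with
    | _ x y =>
      intro h
      exact ⟨s(⟨x, h x (Sym2.mem_mk_left x y)⟩, ⟨y, h y (Sym2.mem_mk_right x y)⟩), rfl⟩

lemma TriIndep.preimage_induce {V : Type*} {G : SimpleGraph V} {s : Set V} {A : Finset (Sym2 V)}
    (hA : TriIndep G A) :
    TriIndep (G.induce s)
      (A.preimage (Sym2.map (↑)) (Sym2.map.injective Subtype.val_injective).injOn) := by
  refine ⟨fun e he => ?_, fun x y z hxy hyz hxz ⟨hxyA, hyzA⟩ => ?_⟩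
  · exact (SimpleGraph.Embedding.induce s).map_mem_edgeSet_iff.1 (hA.1 (mem_preimage.1 he))
  · rw [mem_preimage, Sym2.map_mk] at hxyA hyzA
    exact hA.2 x y z hxy hyz hxz ⟨hxyA, hyzA⟩

section InducedSubgraph

open scoped Classical

variable {V : Type*} [Fintype V] {G : SimpleGraph V} {s : Set V} {A : Finset (Sym2 V)}

variable (G s) in
noncomputable def nonInducedEdges : Finset (Sym2 V) := {e ∈ G.edgeFinset | ∃ x ∈ e, x ∉ s}

lemma TriIndep.card_le_alpha1_induce_add [Fintype s] (hA : TriIndep G A) :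
    #A ≤ alpha1 (G.induce s) + #(nonInducedEdges G s ∩ A) := by
  have hinside :
      #{e ∈ A | e ∈ Set.range (Sym2.map ((↑) : s → V))} ≤ alpha1 (G.induce s) := by
    rw [← card_preimage]
    exact hA.preimage_induce.card_le_alpha1
  have houtside : #{e ∈ A | e ∉ Set.range (Sym2.map ((↑) : s → V))} ≤
      #(nonInducedEdges G s ∩ A) := by
    refine card_le_card fun e he => ?_
    obtain ⟨heA, hes⟩ := mem_filter.1 he
    rw [Sym2.mem_range_map_subtypeVal_iff] at hes
    push Not at hes
    exact mem_inter.2 ⟨mem_filter.2 ⟨G.mem_edgeFinset.2 (hA.1 heA), hes⟩, heA⟩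
  rw [← card_filter_add_card_filter_not (s := A) (· ∈ Set.range (Sym2.map ((↑) : s → V)))]
  omega

lemma TriIndep.cliqueFree_deleteEdges_union (hA : TriIndep G A) {Y : Finset (Sym2 s)}
    (hY : ((G.induce s).deleteEdges Y).CliqueFree 3) :
    (G.deleteEdges ↑(Y.map (Function.Embedding.subtype (· ∈ s)).sym2Map ∪
      (nonInducedEdges G s \ A))).CliqueFree 3 := by
  set H := G.deleteEdges ↑(Y.map (Function.Embedding.subtype (· ∈ s)).sym2Map ∪
      (nonInducedEdges G s \ A))
  have hHG : H ≤ G := G.deleteEdges_le _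
  have hmemA : ∀ x y, H.Adj x y → x ∉ s → s(x, y) ∈ A := by
    intro x y hxy hx
    by_contra hxyA
    refine (SimpleGraph.deleteEdges_adj.1 hxy).2 (mem_union_right _ (mem_sdiff.2 ⟨?_, hxyA⟩))
    exact mem_filter.2 ⟨G.mem_edgeFinset.2 (hHG hxy), x, Sym2.mem_mk_left x y, hx⟩
  -- two edges of a triangle of `H` at a vertex outside `s` would both lie in `A`
  have hapex : ∀ x y z, H.Adj x y → H.Adj x z → H.Adj y z → x ∈ s := by
    intro x y z hxy hxz hyz
    by_contra hx
    exact hA.2 y x z (hHG hxy).symm (hHG hxz) (hHG hyz)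
      ⟨Sym2.eq_swap ▸ hmemA x y hxy hx, hmemA x z hxz hx⟩
  have hinduce : ∀ x y (hx : x ∈ s) (hy : y ∈ s), H.Adj x y →
      ((G.induce s).deleteEdges Y).Adj ⟨x, hx⟩ ⟨y, hy⟩ := by
    intro x y hx hy hxy
    rw [SimpleGraph.deleteEdges_adj] at hxy ⊢
    exact ⟨hxy.1, fun hxyY => hxy.2 (mem_union_left _ (mem_map_of_mem _ hxyY))⟩
  intro t ht
  obtain ⟨a, b, c, hab, hac, hbc, rfl⟩ := SimpleGraph.is3Clique_iff.1 ht
  have ha := hapex a b c hab hac hbc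
  have hb := hapex b a c hab.symm hbc hac
  have hc := hapex c a b hac.symm hbc.symm hab
  exact hY _ (SimpleGraph.is3Clique_triple_iff.2
    ⟨hinduce a b ha hb hab, hinduce a c ha hc hac, hinduce b c hb hc hbc⟩)

lemma TriIndep.tau_le_tau_induce_add [Fintype s] (hA : TriIndep G A) :
    tau G ≤ tau (G.induce s) + #(nonInducedEdges G s \ A) := by
  obtain ⟨Y, hYG, hY, hYcard⟩ := exists_cliqueFree_deleteEdges_card_eq_tau (G.induce s)
  have hXG : ↑(Y.map (Function.Embedding.subtype (· ∈ s)).sym2Map ∪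
      (nonInducedEdges G s \ A)) ⊆ G.edgeSet := by
    intro e he
    rcases mem_union.1 he with he | he
    · obtain ⟨e, heY, rfl⟩ := mem_map.1 he
      exact (SimpleGraph.Embedding.induce s).map_mem_edgeSet_iff.2 (hYG heY)
    · exact G.mem_edgeFinset.1 (mem_filter.1 (mem_sdiff.1 he).1).1
  calc tau G ≤ _ := tau_le_card hXG (hA.cliqueFree_deleteEdges_union hY)
    _ ≤ #Y + #(nonInducedEdges G s \ A) := (card_union_le _ _).trans_eq (by rw [card_map])
    _ = _ := by rw [hYcard]

variable (G s) in
theorem alpha1_add_tau_le_induce_add [Fintype s] :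
    alpha1 G + tau G ≤ alpha1 (G.induce s) + tau (G.induce s) + #(nonInducedEdges G s) := by
  obtain ⟨A, hA, hAcard⟩ := exists_triIndep_card_eq_alpha1 G
  have halpha := hA.card_le_alpha1_induce_add (s := s)
  have htau := hA.tau_le_tau_induce_add (s := s)
  have hsplit := card_sdiff_add_card_inter (nonInducedEdges G s) A
  omega

variable (G) in
lemma nonInducedEdges_compl_singleton (v : V) :
    nonInducedEdges G {v}ᶜ = G.incidenceFinset v := by
  ext e
  simp [nonInducedEdges, SimpleGraph.incidenceFinset_eq_filter]

end InducedSubgraph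

open scoped Classical in
/-- If `G` is a minimal counterexample to the Erdős–Gallai–Tuza conjecture, then its
minimum degree exceeds `n/2`: every vertex has degree greater than `n/2`. -/
theorem stmt2 {V : Type*} [Fintype V] (G : SimpleGraph V) (n : ℕ)
    (hn : Fintype.card V = n)
    (hctx : (alpha1 G + tau G : ℝ) > n ^ 2 / 4)
    (hmin : ∀ S : Finset V, S ≠ Finset.univ →
      (alpha1 (G.induce (S : Set V)) + tau (G.induce (S : Set V)) : ℝ) ≤
        (S.card : ℝ) ^ 2 / 4) :
    ∀ v : V, (G.degree v : ℝ) > n / 2 := by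
  intro v
  set S : Finset V := {v}ᶜ
  have hS : S ≠ univ := by simp [S]
  have hScard : #S = n - 1 := by rw [card_compl, card_singleton, hn]
  have hdel : alpha1 G + tau G ≤
      alpha1 (G.induce (S : Set V)) + tau (G.induce (S : Set V)) + G.degree v := by
    have hedges : nonInducedEdges G S = G.incidenceFinset v := by
      rw [coe_compl, coe_singleton, nonInducedEdges_compl_singleton]
    have h := alpha1_add_tau_le_induce_add G (S : Set V)
    rwa [hedges, SimpleGraph.card_incidenceFinset_eq_degree] at h
  have hbig : n ^ 2 < 4 * (alpha1 G + tau G) := by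
    have : (n : ℝ) ^ 2 < 4 * (alpha1 G + tau G) := by linarith
    exact_mod_cast this
  have hsmall : 4 * (alpha1 (G.induce (S : Set V)) + tau (G.induce (S : Set V))) ≤
      (n - 1) ^ 2 := by
    have h := hmin S hS
    rw [hScard] at h
    have : (4 * (alpha1 (G.induce (S : Set V)) + tau (G.induce (S : Set V))) : ℝ) ≤
        ((n - 1 : ℕ) : ℝ) ^ 2 := by linarith
    exact_mod_cast this
  have hdeg : (n : ℝ) < 2 * G.degree v := by
    exact_mod_cast Nat.lt_two_mul_of_sq_lt_four_mul hbig hsmall hdel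
  linarith
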